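/- Let R be a commutative unital ring, α : ℤ → R a family of elements, and S_s^k(n) the associated Svinin polynomials. Let m ≥ 0 be an integer and let d_0, d_2, …, d_{2m} ∈ R. Define P_{0,n} := Σ_{r=0}^{m} d_{2r} · S_{r+1}^r(n+r−1). Then the following are equivalent: (i) for every n ∈ ℤ, α_{n−1} · P_{0,n−1} − α_n · P_{0,n+1} = 1; (ii) there exists an element c_0 ∈ R such that α satisfies the m-th member of the discrete first Painlevé hierarchy, i.e. Σ_{r=1}^{m+1} d_{2(r−1)} · S_r^r(n+r−1) + (n·1 − c_0) = 0 for every n ∈ ℤ (where n·1 denotes the image of the integer n in R). -/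

import Mathlib

/-!
Put `G n = Σ_{r=1}^{m+1} d_{2(r-1)} · S_r^r(n+r-1)`. Termwise, `G (n-1) - G n` equals
`α_{n-1} P_{0,n-1} - α_n P_{0,n+1}`, by the identity
`S_{k+1}^{k+1}(m) - S_{k+1}^{k+1}(m+1) = α_{m-k} S_{k+1}^k(m-1) - α_{m+1-k} S_{k+1}^k(m+1)`,
which comes from splitting off the extreme terms of the defining sums and applying the
recursion in the lower index
`S_{s+2}^{k+1}(n) = S_{s+1}^{k+1}(n) + α_{n-s-1} S_{s+2}^k(n-1)`.
So condition (i) says `G (n-1) - G n = 1` for every `n`, i.e. that `G n + n` is constant.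
-/

/-- Svinin polynomials: `svinin α s k n` is `S_s^k(n)`, defined by
`S_s^0(n) = 1` and `S_s^k(n) = Σ_{j=0}^{s−1} α_{n−k−j+1} · S_{s−j}^{k−1}(n−j)` for `k ≥ 1`. -/
def svinin {R : Type*} [Ring R] (α : ℤ → R) : ℕ → ℕ → ℤ → R
  | _, 0, _ => 1
  | s, k + 1, n =>
      ∑ j ∈ Finset.range s,
        α (n - ((k : ℤ) + 1) - (j : ℤ) + 1) * svinin α (s - j) k (n - (j : ℤ))

/-- `P0 α m d n` is `P_{0,n} = Σ_{r=0}^{m} d_{2r} · S_{r+1}^r(n+r−1)`,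
where `d r` stands for `d_{2r}`. -/
def P0 {R : Type*} [Ring R] (α : ℤ → R) (m : ℕ) (d : ℕ → R) (n : ℤ) : R :=
  ∑ r ∈ Finset.range (m + 1), d r * svinin α (r + 1) r (n + (r : ℤ) - 1)

open Finset

theorem forall_sub_pred_eq_one_iff {M : Type*} [AddCommGroupWithOne M] (f : ℤ → M) :
    (∀ n : ℤ, f (n - 1) - f n = 1) ↔ ∃ c : M, ∀ n : ℤ, f n + ((n : M) - c) = 0 := by
  constructor
  · intro h
    have hper : Function.Periodic (fun n : ℤ => f n + n) 1 := fun n => by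
      have hn := h (n + 1)
      rw [add_sub_cancel_right] at hn
      simp only [← hn, Int.cast_add, Int.cast_one]
      abel
    refine ⟨f 0, fun n => ?_⟩
    have hn := hper.int_mul_eq n
    simp only [mul_one, Int.cast_id, Int.cast_zero, add_zero] at hn
    rw [← hn]
    abel
  · rintro ⟨c, hc⟩ n
    have hf : ∀ n : ℤ, f n = c - n := fun n => by
      rw [eq_neg_of_add_eq_zero_left (hc n), neg_sub]
    rw [hf, hf]
    push_cast
    abel

section

variable {R : Type*} [CommRing R] (α : ℤ → R)

@[simp]
theorem svinin_zero (s : ℕ) (n : ℤ) : svinin α s 0 n = 1 := by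
  rw [svinin]

theorem svinin_succ_succ (s k : ℕ) (n : ℤ) :
    svinin α (s + 1) (k + 1) n =
      ∑ p ∈ antidiagonal s, α (n - k - p.2) * svinin α (p.1 + 1) k (n - p.2) := by
  rw [svinin, ← Nat.sum_antidiagonal_swap]
  simp only [Prod.fst_swap, Prod.snd_swap]
  rw [Nat.sum_antidiagonal_eq_sum_range_succ
    (fun j i => α (n - k - j) * svinin α (i + 1) k (n - j))]
  refine sum_congr rfl fun j hj => ?_
  rw [Nat.succ_sub (by simpa [Nat.lt_succ_iff] using hj)]
  congr 2
  ring

theorem svinin_one (k : ℕ) (n : ℤ) : svinin α 1 k n = ∏ i ∈ range k, α (n - i) := by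
  induction k with
  | zero => simp
  | succ k ih => simp [svinin_succ_succ, ih, prod_range_succ, mul_comm]

theorem svinin_one_succ (k : ℕ) (n : ℤ) :
    svinin α 1 (k + 1) n = α n * svinin α 1 k (n - 1) := by
  simp only [svinin_one, prod_range_succ', Nat.cast_succ, Nat.cast_zero, sub_zero]
  rw [mul_comm]
  congr 1
  exact prod_congr rfl fun i _ => by ring_nf

theorem svinin_add_two_succ (s k : ℕ) (n : ℤ) :
    svinin α (s + 2) (k + 1) n =
      svinin α (s + 1) (k + 1) n + α (n - s - 1) * svinin α (s + 2) k (n - 1) := by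
  induction k generalizing s n with
  | zero =>
    simp [svinin_succ_succ, Nat.sum_antidiagonal_succ, sub_sub, add_comm]
  | succ k ih =>
    have hsum : ∑ p ∈ antidiagonal s,
          α (n - (k + 1 : ℕ) - p.2) * svinin α (p.1 + 2) (k + 1) (n - p.2) =
        svinin α (s + 1) (k + 2) n + α (n - s - 1) *
          ∑ p ∈ antidiagonal s, α (n - 1 - k - p.2) * svinin α (p.1 + 2) k (n - 1 - p.2) := by
      rw [svinin_succ_succ, mul_sum, ← sum_add_distrib]
      refine sum_congr rfl fun ⟨i, j⟩ hij => ?_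
      -- on the antidiagonal the new factor `α (n - j - i - 1)` is the constant `α (n - s - 1)`
      obtain rfl : i + j = s := mem_antidiagonal.mp hij
      rw [ih]
      push_cast
      ring_nf
    rw [svinin_succ_succ α (s + 1) (k + 1), Nat.sum_antidiagonal_succ, hsum,
      svinin_succ_succ α (s + 1) k, Nat.sum_antidiagonal_succ, svinin_one_succ]
    push_cast
    ring_nf

theorem svinin_diag_sub (k : ℕ) (n : ℤ) :
    svinin α (k + 1) (k + 1) n - svinin α (k + 1) (k + 1) (n + 1) =
      α (n - k) * svinin α (k + 1) k (n - 1) - α (n + 1 - k) * svinin α (k + 1) k (n + 1) := by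
  cases k with
  | zero => simp [svinin_succ_succ]
  | succ k =>
    have hsum : ∑ p ∈ antidiagonal k,
          α (n - (k + 1 : ℕ) - p.2) * svinin α (p.1 + 2) (k + 1) (n - p.2) =
        ∑ p ∈ antidiagonal k, α (n - k - 1 - p.2) * svinin α (p.1 + 1) (k + 1) (n - p.2) +
          α (n - k - 1) * ∑ p ∈ antidiagonal k,
            α (n - 1 - k - p.2) * svinin α (p.1 + 2) k (n - 1 - p.2) := by
      rw [mul_sum, ← sum_add_distrib]
      refine sum_congr rfl fun ⟨i, j⟩ hij => ?_
      obtain rfl : i + j = k := mem_antidiagonal.mp hij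
      rw [svinin_add_two_succ]
      push_cast
      ring_nf
    rw [svinin_succ_succ α (k + 1) (k + 1) n, Nat.sum_antidiagonal_succ,
      svinin_succ_succ α (k + 1) (k + 1) (n + 1), Nat.sum_antidiagonal_succ',
      svinin_succ_succ α (k + 1) k (n - 1), Nat.sum_antidiagonal_succ, svinin_one_succ]
    push_cast at hsum ⊢
    linear_combination (norm := ring_nf) hsum

theorem sum_Icc_svinin_diag_pred_sub (m : ℕ) (d : ℕ → R) (n : ℤ) :
    (∑ r ∈ Icc 1 (m + 1), d (r - 1) * svinin α r r (n - 1 + r - 1)) -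
        ∑ r ∈ Icc 1 (m + 1), d (r - 1) * svinin α r r (n + r - 1) =
      α (n - 1) * P0 α m d (n - 1) - α n * P0 α m d (n + 1) := by
  simp only [← Ico_add_one_right_eq_Icc, sum_Ico_eq_sum_range, add_tsub_cancel_right,
    add_tsub_cancel_left, P0, mul_sum, ← sum_sub_distrib]
  refine sum_congr rfl fun r _ => ?_
  have h := svinin_diag_sub α r (n - 1 + r)
  push_cast at h ⊢
  linear_combination (norm := ring_nf) d r * h

end

/-- In a commutative ring, the compatibility equation
`α_{n−1} · P_{0,n−1} − α_n · P_{0,n+1} = 1` for all `n` holds iff `α` satisfies the `m`-th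
member of the discrete first Painlevé hierarchy
`Σ_{r=1}^{m+1} d_{2(r−1)} · S_r^r(n+r−1) + (n·1 − c_0) = 0` for some constant `c_0`. -/
theorem dPIm_commutative {R : Type*} [CommRing R] (α : ℤ → R)
    (m : ℕ) (d : ℕ → R) :
    (∀ n : ℤ, α (n - 1) * P0 α m d (n - 1) - α n * P0 α m d (n + 1) = 1) ↔
    (∃ c₀ : R, ∀ n : ℤ,
      (∑ r ∈ Finset.Icc 1 (m + 1), d (r - 1) * svinin α r r (n + (r : ℤ) - 1))
        + ((n : R) - c₀) = 0) := by
  simpa only [sum_Icc_svinin_diag_pred_sub] using forall_sub_pred_eq_one_iff fun n : ℤ =>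
    ∑ r ∈ Icc 1 (m + 1), d (r - 1) * svinin α r r (n + r - 1)
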